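/- Let r : U → ℝ be a function on an open subset U of ℝⁿ, q ∈ U. Suppose there exist functions f, g : U → ℝ differentiable at q with f ≤ r ≤ g on U and f(q) = r(q) = g(q). Then for every differentiable curve σ : (−1, 1) → U with σ(0) = q, the limit lim_{t→0} (r(σ(t)) − r(q))/t exists and equals df_q(σ'(0)) = dg_q(σ'(0)). -/
import Mathlib


open Filter

/-- Squeeze argument along curves: if r is squeezed between f and g, which are
differentiable at q with equal values there, then along any differentiable
curve through q the difference quotient of r converges to df_q(σ'(0)) = dg_q(σ'(0)). -/
theorem squeeze_along_curves {n : ℕ} {U : Set (EuclideanSpace ℝ (Fin n))}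
    (hU : IsOpen U) {q : EuclideanSpace ℝ (Fin n)} (hq : q ∈ U)
    (f g r : EuclideanSpace ℝ (Fin n) → ℝ)
    (f' g' : EuclideanSpace ℝ (Fin n) →L[ℝ] ℝ)
    (hf : HasFDerivAt f f' q) (hg : HasFDerivAt g g' q)
    (hfr : ∀ x ∈ U, f x ≤ r x) (hrg : ∀ x ∈ U, r x ≤ g x)
    (hfq : f q = r q) (hgq : g q = r q)
    (σ : ℝ → EuclideanSpace ℝ (Fin n)) (σ' : EuclideanSpace ℝ (Fin n))
    (hσ0 : σ 0 = q) (hσU : ∀ t ∈ Set.Ioo (-1 : ℝ) 1, σ t ∈ U)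
    (hσ : HasDerivAt σ σ' 0) :
    Tendsto (fun t : ℝ => (r (σ t) - r q) / t) (nhdsWithin 0 {(0 : ℝ)}ᶜ)
        (nhds (f' σ')) ∧ f' σ' = g' σ' := by
  -- g - f has a local minimum at q
  have hmin : IsLocalMin (fun x => g x - f x) q := by
    filter_upwards [hU.mem_nhds hq] with x hx
    have h1 := hrg x hx
    have h2 := hfr x hx
    simp only [hgq, hfq]
    linarith
  have hdiff : HasFDerivAt (fun x => g x - f x) (g' - f') q := hg.sub hf
  have heq : f' = g' := by
    have h0 := hmin.fderiv_eq_zero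
    rw [hdiff.fderiv] at h0
    exact (eq_of_sub_eq_zero h0).symm
  -- derivatives of f ∘ σ and g ∘ σ at 0
  have hf0 : HasFDerivAt f f' (σ 0) := hσ0 ▸ hf
  have hg0 : HasFDerivAt g g' (σ 0) := hσ0 ▸ hg
  have hfσ : HasDerivAt (fun t => f (σ t)) (f' σ') 0 := hf0.comp_hasDerivAt 0 hσ
  have hgσ : HasDerivAt (fun t => g (σ t)) (g' σ') 0 := hg0.comp_hasDerivAt 0 hσ
  have hfT : Tendsto (fun t : ℝ => (f (σ t) - f q) / t) (nhdsWithin 0 {(0:ℝ)}ᶜ)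
      (nhds (f' σ')) := by
    have := hfσ.hasDerivWithinAt (s := {(0:ℝ)}ᶜ)
    have h := (hasDerivWithinAt_iff_tendsto_slope).mp this
    rw [show ({(0:ℝ)}ᶜ \ {0} : Set ℝ) = {(0:ℝ)}ᶜ by ext x; simp] at h
    have he : (fun t : ℝ => (f (σ t) - f q) / t) = slope (fun t => f (σ t)) 0 :=
      funext fun t => by simp [slope, hσ0, div_eq_inv_mul]
    rw [he]; exact h
  have hgT : Tendsto (fun t : ℝ => (g (σ t) - g q) / t) (nhdsWithin 0 {(0:ℝ)}ᶜ)
      (nhds (f' σ')) := by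
    have := hgσ.hasDerivWithinAt (s := {(0:ℝ)}ᶜ)
    have h := (hasDerivWithinAt_iff_tendsto_slope).mp this
    rw [show ({(0:ℝ)}ᶜ \ {0} : Set ℝ) = {(0:ℝ)}ᶜ by ext x; simp] at h
    have he : (fun t : ℝ => (g (σ t) - g q) / t) = slope (fun t => g (σ t)) 0 :=
      funext fun t => by simp [slope, hσ0, div_eq_inv_mul]
    rw [heq, he]; exact h
  -- eventually σ t ∈ U
  have hev : ∀ᶠ t in nhds (0:ℝ), σ t ∈ U := by
    have : ContinuousAt σ 0 := hσ.continuousAt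
    have := this.preimage_mem_nhds (hσ0 ▸ hU.mem_nhds hq)
    exact this
  constructor
  · rw [show ({(0:ℝ)}ᶜ : Set ℝ) = Set.Iio 0 ∪ Set.Ioi 0 by
      ext x; simp [lt_or_lt_iff_ne, eq_comm],
      nhdsWithin_union]
    rw [Filter.tendsto_sup]
    constructor
    · -- t < 0 : inequalities reverse after division
      apply tendsto_of_tendsto_of_tendsto_of_le_of_le'
        (hgT.mono_left (nhdsWithin_mono _ (by intro x hx; simp at hx ⊢; exact ne_of_lt hx)))
        (hfT.mono_left (nhdsWithin_mono _ (by intro x hx; simp at hx ⊢; exact ne_of_lt hx)))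
      · filter_upwards [self_mem_nhdsWithin, mem_nhdsWithin_of_mem_nhds hev] with t ht htU
        have h1 : r (σ t) ≤ g (σ t) := hrg _ htU
        have h2 : r (σ t) - r q ≤ g (σ t) - g q := by rw [hgq]; linarith
        exact div_le_div_of_nonpos_of_le (le_of_lt ht) h2
      · filter_upwards [self_mem_nhdsWithin, mem_nhdsWithin_of_mem_nhds hev] with t ht htU
        have h1 : f (σ t) ≤ r (σ t) := hfr _ htU
        have h2 : f (σ t) - f q ≤ r (σ t) - r q := by rw [hfq]; linarith
        exact div_le_div_of_nonpos_of_le (le_of_lt ht) h2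
    · apply tendsto_of_tendsto_of_tendsto_of_le_of_le'
        (hfT.mono_left (nhdsWithin_mono _ (by intro x hx; simp at hx ⊢; exact ne_of_gt hx)))
        (hgT.mono_left (nhdsWithin_mono _ (by intro x hx; simp at hx ⊢; exact ne_of_gt hx)))
      · filter_upwards [self_mem_nhdsWithin, mem_nhdsWithin_of_mem_nhds hev] with t ht htU
        have h1 : f (σ t) ≤ r (σ t) := hfr _ htU
        have h2 : f (σ t) - f q ≤ r (σ t) - r q := by rw [hfq]; linarith
        exact div_le_div_of_nonneg_right h2 (le_of_lt ht)
      · filter_upwards [self_mem_nhdsWithin, mem_nhdsWithin_of_mem_nhds hev] with t ht htU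
        have h1 : r (σ t) ≤ g (σ t) := hrg _ htU
        have h2 : r (σ t) - r q ≤ g (σ t) - g q := by rw [hgq]; linarith
        exact div_le_div_of_nonneg_right h2 (le_of_lt ht)
  · exact congrFun (congrArg _ heq) σ'
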